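/- Let V be a complex vector space, N a positive integer, and T : V → ℂ^N a complex-linear map into the Euclidean space ℂ^N. Define the discrete seminorm p on V by p(v) := ‖T v‖ / √N. Let L : V → V be a complex-linear map and M an invertible N × N complex matrix with T(L v) = M (T v) for all v ∈ V, and denote by ‖M‖₂ the ℓ² operator norm. Let y, u, u' ∈ V and r ∈ V, and suppose p(L(y − u') + r) ≤ p(L(y − u) + r). Then p(y − u') ≤ ‖M‖₂ · ‖M⁻¹‖₂ · p(y − u) + 2 ‖M⁻¹‖₂ · p(r). -/

import Mathlib

/-- Discrete stability bound: monotonicity of discrete residuals implies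
`p (y - u') ≤ cond(M) p (y - u) + 2 ‖M⁻¹‖₂ p r`. -/
theorem discrete_error_bound_condition_number {V : Type*} [AddCommGroup V] [Module ℂ V]
    (N : ℕ) (hN : 0 < N) (T : V →ₗ[ℂ] EuclideanSpace ℂ (Fin N))
    (p : V → ℝ) (hp : ∀ v, p v = ‖T v‖ / Real.sqrt N)
    (L : V →ₗ[ℂ] V) (M : Matrix (Fin N) (Fin N) ℂ) (hM : IsUnit M)
    (hTL : ∀ v, T (L v) = Matrix.toEuclideanCLM (𝕜 := ℂ) M (T v))
    (y u u' r : V)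
    (h : p (L (y - u') + r) ≤ p (L (y - u) + r)) :
    p (y - u') ≤ ‖Matrix.toEuclideanCLM (𝕜 := ℂ) M‖ *
        ‖Matrix.toEuclideanCLM (𝕜 := ℂ) M⁻¹‖ * p (y - u) +
      2 * ‖Matrix.toEuclideanCLM (𝕜 := ℂ) M⁻¹‖ * p r := by
  set A := Matrix.toEuclideanCLM (𝕜 := ℂ) M with hA
  set B := Matrix.toEuclideanCLM (𝕜 := ℂ) M⁻¹ with hB
  have hsN : (0:ℝ) < Real.sqrt N := Real.sqrt_pos.mpr (by exact_mod_cast hN)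
  have hBA : ∀ x : EuclideanSpace ℂ (Fin N), B (A x) = x := by
    intro x
    have : B * A = 1 := by
      rw [hA, hB, ← map_mul, Matrix.nonsing_inv_mul M ((Matrix.isUnit_iff_isUnit_det M).mp hM), map_one]
    calc B (A x) = (B * A) x := rfl
      _ = x := by rw [this]; rfl
  -- norm inequalities
  have hnorm : ‖T (L (y - u') + r)‖ ≤ ‖T (L (y - u) + r)‖ := by
    have h1 := h
    rw [hp, hp] at h1
    exact (div_le_div_iff_of_pos_right hsN).mp h1
  have key : ‖T (y - u')‖ ≤ ‖A‖ * ‖B‖ * ‖T (y - u)‖ + 2 * ‖B‖ * ‖T r‖ := by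
    have hTu' : T (y - u') = B (T (L (y - u'))) := by
      rw [hTL, hBA]
    have e1 : ‖T (y - u')‖ ≤ ‖B‖ * ‖T (L (y - u'))‖ := by
      rw [hTu']; exact B.le_opNorm _
    have e2 : ‖T (L (y - u'))‖ ≤ ‖T (L (y - u') + r)‖ + ‖T r‖ := by
      have : T (L (y - u')) = T (L (y - u') + r) - T r := by
        rw [map_add]; abel
      rw [this]; exact norm_sub_le _ _
    have e3 : ‖T (L (y - u) + r)‖ ≤ ‖A‖ * ‖T (y - u)‖ + ‖T r‖ := by
      rw [map_add]
      refine (norm_add_le _ _).trans ?_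
      gcongr
      rw [hTL]; exact A.le_opNorm _
    have hBnn : (0:ℝ) ≤ ‖B‖ := norm_nonneg B
    calc ‖T (y - u')‖ ≤ ‖B‖ * ‖T (L (y - u'))‖ := e1
      _ ≤ ‖B‖ * (‖T (L (y - u') + r)‖ + ‖T r‖) := mul_le_mul_of_nonneg_left e2 hBnn
      _ ≤ ‖B‖ * (‖T (L (y - u) + r)‖ + ‖T r‖) :=
          mul_le_mul_of_nonneg_left (add_le_add hnorm le_rfl) hBnn
      _ ≤ ‖B‖ * ((‖A‖ * ‖T (y - u)‖ + ‖T r‖) + ‖T r‖) :=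
          mul_le_mul_of_nonneg_left (add_le_add e3 le_rfl) hBnn
      _ = ‖A‖ * ‖B‖ * ‖T (y - u)‖ + 2 * ‖B‖ * ‖T r‖ := by ring
  rw [hp, hp, hp]
  calc ‖T (y - u')‖ / Real.sqrt N
      ≤ (‖A‖ * ‖B‖ * ‖T (y - u)‖ + 2 * ‖B‖ * ‖T r‖) / Real.sqrt N :=
        (div_le_div_iff_of_pos_right hsN).mpr key
    _ = ‖A‖ * ‖B‖ * (‖T (y - u)‖ / Real.sqrt N) + 2 * ‖B‖ * (‖T r‖ / Real.sqrt N) := by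
        rw [add_div, mul_div_assoc, mul_div_assoc]
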